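/- arXiv:1008.3724 — 11 statements merged into one kernel-verified Lean document; each statement's English description precedes it below -/
import Mathlib

section
/- Let P be a finite poset that is 2-wide (i.e., whenever a ≺ b ≺ c in the covering relation, there exists d ≠ b with a ≺ d ≺ c), and let f : P → ℝ be a discrete Morse function (for each b there is at most one a with a ≺ b and f(a) ≥ f(b), and at most one c with b ≺ c and f(b) ≥ f(c)). Then for any b ∈ P, there cannot simultaneously exist a ∈ P with a ≺ b and f(a) ≥ f(b), and c ∈ P with b ≺ c and f(b) ≥ f(c). -/
open Finset
open scoped Classical

variable {P : Type*}

/-- `P` is 2-wide: whenever `a ⋖ b ⋖ c` there is `d ≠ b` with `a ⋖ d ⋖ c`. -/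
def TwoWide (P : Type*) [PartialOrder P] : Prop :=
  ∀ a b c : P, a ⋖ b → b ⋖ c → ∃ d, d ≠ b ∧ a ⋖ d ∧ d ⋖ c

/-- `f` is a discrete Morse function. -/
def IsDMF [PartialOrder P] (f : P → ℝ) : Prop :=
  ∀ b : P, {a | a ⋖ b ∧ f b ≤ f a}.Subsingleton ∧ {c | b ⋖ c ∧ f c ≤ f b}.Subsingleton

/-- `b` is (discrete-)critical for `f`. -/
def IsCrit [PartialOrder P] (f : P → ℝ) (b : P) : Prop :=
  (∀ a, a ⋖ b → f a < f b) ∧ (∀ c, b ⋖ c → f b < f c)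

/-- `μ` is a parity rank function. -/
def ParityRank [PartialOrder P] (μ : P → ℕ) : Prop :=
  (∀ a, μ a ≤ 1) ∧ (∀ a, IsMin a → μ a = 0) ∧ ∀ a b : P, a ⋖ b → μ b = 1 - μ a

/-- Sum of `(-1)^(length C)` over all nonempty chains `C` of `P` satisfying `p`. -/
noncomputable def chainSum [PartialOrder P] [Fintype P] (p : Finset P → Prop) : ℤ :=
  ∑ C ∈ Finset.univ.filter
      (fun C : Finset P => C.Nonempty ∧ IsChain (· ≤ ·) (↑C : Set P) ∧ p C),
    (-1 : ℤ) ^ (C.card - 1)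

/-- `P` is downward Eulerian with respect to `μ`. -/
def DownEulerian [PartialOrder P] [Fintype P] (μ : P → ℕ) : Prop :=
  ∀ a : P, ¬ IsMin a →
    chainSum (fun C => ∀ x ∈ C, x < a) = (-1 : ℤ) ^ (μ a + 1) + 1

theorem stmt0 [PartialOrder P] [Fintype P] (hw : TwoWide P) (f : P → ℝ) (hf : IsDMF f)
    (b : P) :
    ¬ ((∃ a, a ⋖ b ∧ f b ≤ f a) ∧ (∃ c, b ⋖ c ∧ f c ≤ f b)) := by
  rintro ⟨⟨a, hab, hfba⟩, ⟨c, hbc, hfcb⟩⟩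
  obtain ⟨d, hdb, had, hdc⟩ := hw a b c hab hbc
  -- f c ≤ f d would force d = b via subsingleton at c
  have hdc' : f d < f c := by
    by_contra h
    push_neg at h
    exact hdb ((hf c).1 ⟨hdc, h⟩ ⟨hbc, hfcb⟩)
  have hda : f d ≤ f a := le_trans (le_of_lt hdc') (le_trans hfcb hfba)
  exact hdb ((hf a).2 ⟨had, hda⟩ ⟨hab, hfba⟩)
end

section
/- Let P be a finite poset that is 2-wide, parity-graded with parity rank function μ, and downward Eulerian. Then for every b ∈ P, the sum over all nonempty chains C in the closed lower set {x : x ≤ b} with b ∈ C of (−1)^{ℓ(C)} equals (−1)^{μ(b)}, where ℓ(C) = |C| − 1 is the length of the chain. -/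
open Finset
open scoped Classical

variable {P : Type*}

/-! A chain of `{x ≤ b}` through `b` is `insert b D` for a unique, possibly empty, chain `D`
of `{x < b}`, and has length `|D|`. Hence the sum equals `1 - χ(Δ({x < b}))`, which is `1`
when `b` is minimal and `(-1)^μ(b)` otherwise, by the Eulerian condition. -/

section ChainSum

variable [PartialOrder P] [Fintype P]

/-- Unlike in `chainSum`, the empty chain is included. -/
noncomputable def chainsBelow (b : P) : Finset (Finset P) :=
  univ.filter fun C : Finset P => IsChain (· ≤ ·) (↑C : Set P) ∧ ∀ x ∈ C, x < b

lemma mem_chainsBelow {b : P} {C : Finset P} :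
    C ∈ chainsBelow b ↔ IsChain (· ≤ ·) (↑C : Set P) ∧ ∀ x ∈ C, x < b := by
  simp [chainsBelow]

lemma chainSum_top_eq_sum_chainsBelow (b : P) :
    chainSum (fun C => (∀ x ∈ C, x ≤ b) ∧ b ∈ C) = ∑ D ∈ chainsBelow b, (-1 : ℤ) ^ D.card := by
  unfold chainSum
  refine sum_bij' (fun C _ => C.erase b) (fun D _ => insert b D) ?_ ?_ ?_ ?_ ?_
  · intro C hC
    simp only [mem_filter, mem_univ, true_and] at hC
    obtain ⟨-, hchain, hle, -⟩ := hC
    refine mem_chainsBelow.2 ⟨hchain.mono (coe_subset.2 (erase_subset _ _)), fun x hx => ?_⟩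
    rw [mem_erase] at hx
    exact (hle x hx.2).lt_of_ne hx.1
  · intro D hD
    obtain ⟨hchain, hlt⟩ := mem_chainsBelow.1 hD
    simp only [mem_filter, mem_univ, true_and, forall_mem_insert]
    refine ⟨insert_nonempty _ _, ?_, ⟨le_rfl, fun x hx => (hlt x hx).le⟩, mem_insert_self _ _⟩
    rw [coe_insert]
    exact hchain.insert fun x hx _ => Or.inr (hlt x hx).le
  · intro C hC
    simp only [mem_filter, mem_univ, true_and] at hC
    exact insert_erase hC.2.2.2
  · intro D hD
    exact erase_insert fun hb => lt_irrefl b ((mem_chainsBelow.1 hD).2 b hb)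
  · intro C hC
    simp only [mem_filter, mem_univ, true_and] at hC
    rw [card_erase_of_mem hC.2.2.2]

lemma sum_chainsBelow_eq_one_sub_chainSum (b : P) :
    ∑ D ∈ chainsBelow b, (-1 : ℤ) ^ D.card = 1 - chainSum (fun C => ∀ x ∈ C, x < b) := by
  have hempty : (∅ : Finset P) ∈ chainsBelow b :=
    mem_chainsBelow.2 ⟨by simp [IsChain], by simp⟩
  rw [← add_sum_erase _ _ hempty, chainSum, sub_eq_add_neg, ← sum_neg_distrib, card_empty,
    pow_zero]
  refine congrArg _ (sum_congr ?_ fun C hC => ?_)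
  · ext C
    simp [chainsBelow, nonempty_iff_ne_empty]
  · simp only [mem_filter, mem_univ, true_and] at hC
    rw [← Nat.sub_add_cancel hC.1.card_pos, pow_succ, Nat.add_sub_cancel]
    ring

lemma chainSum_lt_of_isMin {b : P} (hb : IsMin b) : chainSum (fun C => ∀ x ∈ C, x < b) = 0 := by
  refine sum_eq_zero fun C hC => ?_
  simp only [mem_filter, mem_univ, true_and] at hC
  obtain ⟨⟨x, hx⟩, -, hlt⟩ := hC
  exact absurd (hlt x hx) hb.not_lt

end ChainSum

theorem stmt5_general [PartialOrder P] [Fintype P] (μ : P → ℕ)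
    (hμ : ParityRank μ) (hE : DownEulerian μ) (b : P) :
    chainSum (fun C => (∀ x ∈ C, x ≤ b) ∧ b ∈ C) = (-1 : ℤ) ^ μ b := by
  rw [chainSum_top_eq_sum_chainsBelow, sum_chainsBelow_eq_one_sub_chainSum]
  by_cases hmin : IsMin b
  · rw [chainSum_lt_of_isMin hmin, hμ.2.1 b hmin]
    norm_num
  · rw [hE b hmin, pow_succ]
    ring

theorem stmt5 [PartialOrder P] [Fintype P] (hw : TwoWide P) (μ : P → ℕ)
    (hμ : ParityRank μ) (hE : DownEulerian μ) (b : P) :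
    chainSum (fun C => (∀ x ∈ C, x ≤ b) ∧ b ∈ C) = (-1 : ℤ) ^ μ b :=
  stmt5_general μ hμ hE b
end

section
/- Let P be a finite poset, parity-graded with parity rank function μ and downward Eulerian. If a ≺ b in P, then the sum of (−1)^{ℓ(C)} over all nonempty chains C contained in {x : x ≤ b} that contain b but do not contain a equals 0. -/
open Finset
open scoped Classical

variable {P : Type*}

lemma sum_top [PartialOrder P] [Fintype P] (t : P) (s : P → Prop) (hs : ∀ x, s x → x < t) :
    ∑ C ∈ Finset.univ.filter
      (fun C : Finset P => C.Nonempty ∧ IsChain (· ≤ ·) (↑C : Set P) ∧ t ∈ C ∧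
        ∀ x ∈ C, x ≠ t → s x),
      (-1 : ℤ) ^ (C.card - 1)
    = ∑ D ∈ Finset.univ.filter
      (fun D : Finset P => IsChain (· ≤ ·) (↑D : Set P) ∧ ∀ x ∈ D, s x),
      (-1 : ℤ) ^ D.card := by
  apply Finset.sum_nbij' (fun C => C.erase t) (fun D => insert t D)
  · intro C hC
    simp only [mem_filter, mem_univ, true_and] at hC ⊢
    obtain ⟨-, hchain, htC, hsC⟩ := hC
    refine ⟨hchain.mono ?_, fun x hx => hsC x (mem_of_mem_erase hx) (ne_of_mem_erase hx)⟩
    rw [coe_erase]; exact Set.diff_subset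
  · intro D hD
    simp only [mem_filter, mem_univ, true_and] at hD ⊢
    obtain ⟨hchain, hsD⟩ := hD
    refine ⟨insert_nonempty _ _, ?_, mem_insert_self _ _, ?_⟩
    · rw [coe_insert]
      exact hchain.insert (fun y hy _ => Or.inr (hs y (hsD y hy)).le)
    · intro x hx hxt
      rcases mem_insert.1 hx with h | h
      · exact absurd h hxt
      · exact hsD x h
  · intro C hC
    simp only [mem_filter, mem_univ, true_and] at hC
    exact insert_erase hC.2.2.1
  · intro D hD
    simp only [mem_filter, mem_univ, true_and] at hD
    refine erase_insert (fun htD => ?_)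
    exact absurd (hs t (hD.2 t htD)) (lt_irrefl t)
  · intro C hC
    simp only [mem_filter, mem_univ, true_and] at hC
    rw [card_erase_of_mem hC.2.2.1]

lemma sum_all_chains [PartialOrder P] [Fintype P] (s : P → Prop) :
    ∑ D ∈ Finset.univ.filter
      (fun D : Finset P => IsChain (· ≤ ·) (↑D : Set P) ∧ ∀ x ∈ D, s x),
      (-1 : ℤ) ^ D.card
    = 1 - chainSum (fun D => ∀ x ∈ D, s x) := by
  have hset : Finset.univ.filter
      (fun D : Finset P => IsChain (· ≤ ·) (↑D : Set P) ∧ ∀ x ∈ D, s x)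
      = insert (∅ : Finset P) (Finset.univ.filter
      (fun D : Finset P => D.Nonempty ∧ IsChain (· ≤ ·) (↑D : Set P) ∧ ∀ x ∈ D, s x)) := by
    ext D
    simp only [mem_filter, mem_univ, true_and, mem_insert]
    constructor
    · intro ⟨h1, h2⟩
      rcases D.eq_empty_or_nonempty with h | h
      · exact Or.inl h
      · exact Or.inr ⟨h, h1, h2⟩
    · rintro (rfl | ⟨-, h1, h2⟩)
      · simp
      · exact ⟨h1, h2⟩
  rw [hset, Finset.sum_insert (by simp)]
  have : ∀ D ∈ Finset.univ.filter
      (fun D : Finset P => D.Nonempty ∧ IsChain (· ≤ ·) (↑D : Set P) ∧ ∀ x ∈ D, s x),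
      (-1 : ℤ) ^ D.card = -((-1 : ℤ) ^ (D.card - 1)) := by
    intro D hD
    simp only [mem_filter, mem_univ, true_and] at hD
    have h1 : D.card = D.card - 1 + 1 := (Nat.succ_pred_eq_of_pos (card_pos.2 hD.1)).symm
    conv_lhs => rw [h1]
    rw [pow_succ]; ring
  rw [Finset.sum_congr rfl this, Finset.sum_neg_distrib, chainSum]
  simp only [card_empty, pow_zero]
  ring_nf
  congr 1
  apply Finset.sum_congr _ (fun _ _ => rfl)
  ext C
  simp only [mem_filter, mem_univ, true_and]

lemma chainSum_congr [PartialOrder P] [Fintype P] (p q : Finset P → Prop)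
    (h : ∀ C : Finset P, C.Nonempty → IsChain (· ≤ ·) (↑C : Set P) → (p C ↔ q C)) :
    chainSum p = chainSum q := by
  unfold chainSum
  apply Finset.sum_congr _ (fun _ _ => rfl)
  ext C
  simp only [mem_filter, mem_univ, true_and]
  constructor
  · rintro ⟨h1, h2, h3⟩; exact ⟨h1, h2, (h C h1 h2).1 h3⟩
  · rintro ⟨h1, h2, h3⟩; exact ⟨h1, h2, (h C h1 h2).2 h3⟩


theorem stmt6 [PartialOrder P] [Fintype P] (μ : P → ℕ)
    (hμ : ParityRank μ) (hE : DownEulerian μ) (a b : P) (hab : a ⋖ b) :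
    chainSum (fun C => (∀ x ∈ C, x ≤ b) ∧ b ∈ C ∧ a ∉ C) = 0 := by
  obtain ⟨hμ1, hμmin, hμcov⟩ := hμ
  have hne : a ≠ b := hab.lt.ne
  -- Step 1: rewrite the target via the top-element bijection
  have step1 : chainSum (fun C : Finset P => (∀ x ∈ C, x ≤ b) ∧ b ∈ C ∧ a ∉ C)
      = 1 - chainSum (fun D : Finset P => ∀ x ∈ D, x < b ∧ x ≠ a) := by
    rw [← sum_all_chains, ← sum_top b (fun x => x < b ∧ x ≠ a) (fun x hx => hx.1)]
    unfold chainSum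
    apply Finset.sum_congr _ (fun _ _ => rfl)
    ext C
    simp only [mem_filter, mem_univ, true_and]
    constructor
    · rintro ⟨h1, h2, hle, hbC, haC⟩
      refine ⟨h1, h2, hbC, fun x hx hxb => ⟨lt_of_le_of_ne (hle x hx) hxb, ?_⟩⟩
      rintro rfl; exact haC hx
    · rintro ⟨h1, h2, hbC, hC⟩
      refine ⟨h1, h2, fun x hx => ?_, hbC, fun haC => ?_⟩
      · by_cases hxb : x = b
        · exact hxb.le
        · exact (hC x hx hxb).1.le
      · exact (hC a haC hne).2 rfl
  -- Step 2: chains below b containing a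
  have step2 : chainSum (fun C : Finset P => (∀ x ∈ C, x < b) ∧ a ∈ C)
      = 1 - chainSum (fun D : Finset P => ∀ x ∈ D, x < a) := by
    rw [← sum_all_chains, ← sum_top a (fun x => x < a) (fun x hx => hx)]
    unfold chainSum
    apply Finset.sum_congr _ (fun _ _ => rfl)
    ext C
    simp only [mem_filter, mem_univ, true_and]
    constructor
    · rintro ⟨h1, h2, hlt, haC⟩
      refine ⟨h1, h2, haC, fun x hx hxa => ?_⟩
      have := h2 (Finset.mem_coe.2 hx) (Finset.mem_coe.2 haC) hxa
      rcases this with h | h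
      · exact lt_of_le_of_ne h hxa
      · exact absurd (hlt x hx) (hab.2 (lt_of_le_of_ne h (Ne.symm hxa)))
    · rintro ⟨h1, h2, haC, hC⟩
      refine ⟨h1, h2, fun x hx => ?_, haC⟩
      by_cases hxa : x = a
      · exact hxa ▸ hab.lt
      · exact (hC x hx hxa).trans hab.lt
  -- Step 3: split chains below b by membership of a
  have step3 : chainSum (fun C : Finset P => ∀ x ∈ C, x < b)
      = chainSum (fun C : Finset P => (∀ x ∈ C, x < b) ∧ a ∈ C)
        + chainSum (fun C : Finset P => (∀ x ∈ C, x < b) ∧ a ∉ C) := by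
    unfold chainSum
    rw [← Finset.sum_filter_add_sum_filter_not _ (fun C => a ∈ C)]
    congr 1 <;> · rw [Finset.filter_filter]; apply Finset.sum_congr _ (fun _ _ => rfl); ext C
                  simp only [mem_filter, mem_univ, true_and]; tauto
  -- identify the two variants of the "no a" predicate
  have hcongr : chainSum (fun D : Finset P => ∀ x ∈ D, x < b ∧ x ≠ a)
      = chainSum (fun C : Finset P => (∀ x ∈ C, x < b) ∧ a ∉ C) := by
    apply chainSum_congr
    intro C _ _
    constructor
    · intro h
      exact ⟨fun x hx => (h x hx).1, fun ha => (h a ha).2 rfl⟩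
    · rintro ⟨h1, h2⟩ x hx
      exact ⟨h1 x hx, fun hxa => h2 (hxa ▸ hx)⟩
  -- Eulerian values
  have hbmin : ¬ IsMin b := fun h => absurd hab.lt (h.not_lt)
  have hEb : chainSum (fun C : Finset P => ∀ x ∈ C, x < b) = (-1 : ℤ) ^ (μ b + 1) + 1 := hE b hbmin
  have hμb : μ b = 1 - μ a := hμcov a b hab
  have key : chainSum (fun C : Finset P => ∀ x ∈ C, x < b)
      + chainSum (fun D : Finset P => ∀ x ∈ D, x < a) = 2 := by
    by_cases hamin : IsMin a
    · have h0 : chainSum (fun D : Finset P => ∀ x ∈ D, x < a) = 0 := by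
        unfold chainSum
        apply Finset.sum_eq_zero
        intro C hC
        simp only [mem_filter, mem_univ, true_and] at hC
        obtain ⟨⟨x, hx⟩, -, hlt⟩ := hC
        exact absurd (hlt x hx) (hamin.not_lt)
      have hμa : μ a = 0 := hμmin a hamin
      rw [hEb, h0, hμb, hμa]
      norm_num
    · have hEa : chainSum (fun D : Finset P => ∀ x ∈ D, x < a)
          = (-1 : ℤ) ^ (μ a + 1) + 1 := hE a hamin
      rw [hEb, hEa, hμb]
      rcases Nat.le_one_iff_eq_zero_or_eq_one.1 (hμ1 a) with h | h <;> rw [h] <;> norm_num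
  rw [step1, hcongr]
  have : chainSum (fun C : Finset P => (∀ x ∈ C, x < b) ∧ a ∉ C)
      = chainSum (fun C : Finset P => ∀ x ∈ C, x < b)
        - (1 - chainSum (fun D : Finset P => ∀ x ∈ D, x < a)) := by
    rw [step3, step2]; ring
  rw [this]
  linarith [key]
end

section
/- Let P be a finite poset, parity-graded with parity rank function μ and downward Eulerian. If a ≺ b in P, then the sum of (−1)^{ℓ(C)} over all nonempty chains C contained in {x : x ≤ b} that contain a equals 0. -/
open Finset
open scoped Classical

variable {P : Type*}

theorem stmt7 [PartialOrder P] [Fintype P] (μ : P → ℕ)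
    (hμ : ParityRank μ) (hE : DownEulerian μ) (a b : P) (hab : a ⋖ b) :
    chainSum (fun C => (∀ x ∈ C, x ≤ b) ∧ a ∈ C) = 0 := by
  classical
  have hanb : a ≠ b := hab.lt.ne
  unfold chainSum
  apply Finset.sum_involution
    (g := fun C _ => if b ∈ C then C.erase b else insert b C)
  case g_mem =>
    intro C hC
    simp only [Finset.mem_filter, Finset.mem_univ, true_and] at hC ⊢
    obtain ⟨hne, hch, hle, haC⟩ := hC
    by_cases hbC : b ∈ C
    · simp only [hbC, if_true]
      refine ⟨⟨a, Finset.mem_erase.2 ⟨hanb, haC⟩⟩, ?_, ?_, Finset.mem_erase.2 ⟨hanb, haC⟩⟩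
      · exact hch.mono (by intro x hx; exact Finset.mem_of_mem_erase hx)
      · intro x hx; exact hle x (Finset.mem_of_mem_erase hx)
    · simp only [hbC, if_false]
      refine ⟨⟨a, Finset.mem_insert_of_mem haC⟩, ?_, ?_, Finset.mem_insert_of_mem haC⟩
      · have : (↑(insert b C) : Set P) = insert b (↑C : Set P) := by simp
        rw [this]
        exact hch.insert (fun x hx _ => Or.inr (hle x hx))
      · intro x hx
        rcases Finset.mem_insert.1 hx with h | h
        · exact h.le
        · exact hle x h
  case hg₁ =>
    intro C hC
    simp only [Finset.mem_filter, Finset.mem_univ, true_and] at hC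
    obtain ⟨hne, hch, hle, haC⟩ := hC
    by_cases hbC : b ∈ C
    · simp only [hbC, if_true]
      have h2 : 2 ≤ C.card := Finset.one_lt_card.2 ⟨a, haC, b, hbC, hanb⟩
      obtain ⟨m, hm⟩ : ∃ m, C.card = m + 2 := ⟨C.card - 2, by omega⟩
      rw [Finset.card_erase_of_mem hbC, hm]
      simp [pow_succ]
    · simp only [hbC, if_false]
      have h1 : 1 ≤ C.card := Finset.card_pos.2 hne
      obtain ⟨m, hm⟩ : ∃ m, C.card = m + 1 := ⟨C.card - 1, by omega⟩
      rw [Finset.card_insert_of_notMem hbC, hm]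
      simp [pow_succ]
  case hg₃ =>
    intro C hC _
    by_cases hbC : b ∈ C
    · simp only [hbC, if_true]
      intro h
      exact (h ▸ Finset.notMem_erase b C) hbC
    · simp only [hbC, if_false]
      intro h
      exact hbC (h ▸ Finset.mem_insert_self b C)
  case hg₄ =>
    intro C hC
    by_cases hbC : b ∈ C
    · simp [hbC, Finset.notMem_erase, Finset.insert_erase hbC]
    · simp [hbC, Finset.erase_insert hbC]
end

section
/- Let P be a finite poset and f : P → ℝ a discrete Morse function. Then there exists a discrete Morse function g : P → ℝ that is injective and has the same set of critical elements as f (an element b is critical for f iff it is critical for g). -/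
open Finset
open scoped Classical

variable {P : Type*}

theorem stmt9 [PartialOrder P] [Fintype P] (f : P → ℝ) (hf : IsDMF f) :
    ∃ g : P → ℝ, IsDMF g ∧ Function.Injective g ∧ ∀ b : P, (IsCrit f b ↔ IsCrit g b) := by
  rcases isEmpty_or_nonempty P with hP | hP
  · exact ⟨f, hf, fun x => (IsEmpty.false x).elim, fun b => Iff.rfl⟩
  -- a strictly antitone injection h : P → ℝ, via a linear extension
  set h : P → ℝ := fun x =>
    -((univ.filter (fun z : P => toLinearExtension z ≤ toLinearExtension x)).card : ℝ) with hh
  have htl : StrictMono (toLinearExtension (α := P)) :=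
    toLinearExtension.monotone.strictMono_of_injective (fun a b hab => hab)
  have hlt : ∀ x y : P, toLinearExtension x < toLinearExtension y → h y < h x := by
    intro x y hxy
    have hss : (univ.filter (fun z : P => toLinearExtension z ≤ toLinearExtension x)) ⊂
        (univ.filter (fun z : P => toLinearExtension z ≤ toLinearExtension y)) := by
      refine Finset.ssubset_iff_of_subset ?_ |>.mpr ⟨y, ?_, ?_⟩
      · intro z hz
        simp only [mem_filter, mem_univ, true_and] at hz ⊢
        exact hz.trans hxy.le
      · simp
      · simp [not_le.mpr hxy]
    have := Finset.card_lt_card hss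
    simp only [hh, neg_lt_neg_iff]
    exact_mod_cast this
  have hinj : Function.Injective h := by
    intro x y hxy
    by_contra hne
    have : toLinearExtension x ≠ toLinearExtension y := fun e => hne e
    rcases this.lt_or_gt with hl | hl
    · exact absurd hxy.symm (ne_of_lt (hlt _ _ hl))
    · exact absurd hxy (ne_of_lt (hlt _ _ hl))
  have hanti : ∀ x y : P, x < y → h y < h x := fun x y hxy => hlt x y (htl hxy)
  -- constants
  set S : Finset (P × P) := (univ ×ˢ univ).filter (fun p : P × P => f p.1 < f p.2) with hS
  set δ : ℝ := if hne : S.Nonempty then S.inf' hne (fun p => f p.2 - f p.1) else 1 with hδ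
  have δpos : 0 < δ := by
    rw [hδ]
    split_ifs with hne
    · rw [Finset.lt_inf'_iff]
      intro p hp
      rw [hS, mem_filter] at hp
      linarith [hp.2]
    · norm_num
  have δle : ∀ x y : P, f x < f y → δ ≤ f y - f x := by
    intro x y hxy
    have hmem : (x, y) ∈ S := by simp [hS, hxy]
    have hne : S.Nonempty := ⟨_, hmem⟩
    rw [hδ, dif_pos hne]
    exact Finset.inf'_le _ hmem
  set M : ℝ := univ.sup' univ_nonempty (fun x => |h x|) with hMdef
  have hM : ∀ x, |h x| ≤ M := fun x => Finset.le_sup' (fun x => |h x|) (mem_univ x)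
  have hM0 : 0 ≤ M := le_trans (abs_nonneg _) (hM Classical.ofNonempty)
  set ε : ℝ := δ / (2 * M + 2) with hε
  have hden : (0:ℝ) < 2 * M + 2 := by linarith
  have εpos : 0 < ε := div_pos δpos hden
  have εeq : ε * (2 * M + 2) = δ := div_mul_cancel₀ _ (ne_of_gt hden)
  set g : P → ℝ := fun x => f x + ε * h x with hg
  have key1 : ∀ x y : P, f x < f y → g x < g y := by
    intro x y hxy
    have h1 := δle x y hxy
    obtain ⟨hx1, hx2⟩ := abs_le.mp (hM x)
    obtain ⟨hy1, hy2⟩ := abs_le.mp (hM y)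
    simp only [hg]
    nlinarith [εpos, εeq]
  have key2 : ∀ x y : P, x < y → ¬ f x < f y → g y < g x := by
    intro x y hxy hfxy
    rcases lt_or_eq_of_le (not_lt.mp hfxy) with hlt | heq
    · exact key1 y x hlt
    · have := hanti x y hxy
      simp only [hg, heq]
      nlinarith [εpos]
  have hcoviff : ∀ x y : P, x < y → (f x < f y ↔ g x < g y) := by
    intro x y hxy
    constructor
    · exact key1 x y
    · intro hg'
      by_contra hn
      exact absurd hg' (not_lt.mpr (key2 x y hxy hn).le)
  have ginj : Function.Injective g := by
    intro x y hxy
    have hfeq : f x = f y := by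
      by_contra hne
      rcases (Ne.lt_or_gt hne) with hl | hl
      · exact absurd hxy (ne_of_lt (key1 _ _ hl))
      · exact absurd hxy.symm (ne_of_lt (key1 _ _ hl))
    have : ε * h x = ε * h y := by
      have := hxy
      simp only [hg, hfeq] at this
      linarith
    exact hinj (mul_left_cancel₀ (ne_of_gt εpos) this)
  refine ⟨g, ?_, ginj, ?_⟩
  · intro b
    refine ⟨(hf b).1.anti ?_, (hf b).2.anti ?_⟩
    · intro a ha
      refine ⟨ha.1, ?_⟩
      by_contra hn
      have := (hcoviff a b ha.1.lt).mp (not_le.mp hn)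
      exact absurd ha.2 (not_le.mpr this)
    · intro c hc
      refine ⟨hc.1, ?_⟩
      by_contra hn
      have := (hcoviff b c hc.1.lt).mp (not_le.mp hn)
      exact absurd hc.2 (not_le.mpr this)
  · intro b
    constructor
    · rintro ⟨h1, h2⟩
      exact ⟨fun a ha => (hcoviff a b ha.lt).mp (h1 a ha),
        fun c hc => (hcoviff b c hc.lt).mp (h2 c hc)⟩
    · rintro ⟨h1, h2⟩
      exact ⟨fun a ha => (hcoviff a b ha.lt).mpr (h1 a ha),
        fun c hc => (hcoviff b c hc.lt).mpr (h2 c hc)⟩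
end

section
/- Let P be a finite 2-wide poset and f : P → ℝ a discrete Morse function. Then there exists a discrete Morse function g on P such that: (1) an element is critical for g iff it is critical for f; (2) g is injective; (3) whenever z < x ≺ y < w (with x ≺ y a covering) and g(x) < g(y), then g(z) < g(y) and g(x) < g(w). -/
open Finset
open scoped Classical

variable {P : Type*}

/-!
Let `coverMax f v` be the largest value of `f` on `v` and its lower covers. The Morse condition
and 2-wideness make it monotone in `v`, strictly increasing along every cover `a ⋖ b` with
`f a < f b`, and weakly decreasing along every cover with `f b ≤ f a`. Order `P` lexicographically
by `coverMax f` and then by a linear extension of the reversed order, and let `g` be the rank in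
this linear order. Then `g a < g b ↔ f a < f b` on covers, so `g` is Morse with the critical
elements of `f`, and property (3) is inherited from the strict monotonicity of `coverMax f`.
-/

open Function

lemma exists_injective_real_lt_iff {α β : Type*} [Fintype α] [LinearOrder β] {k : α → β}
    (hk : Injective k) : ∃ g : α → ℝ, Injective g ∧ ∀ a b, g a < g b ↔ k a < k b := by
  set g : α → ℝ := fun a => (#{t | k t < k a} : ℕ)
  have hlt : ∀ a b, g a < g b ↔ k a < k b := by
    intro a b
    refine ⟨fun h => ?_, fun h => ?_⟩
    · by_contra! hba
      refine h.not_ge (Nat.cast_le.2 (card_le_card fun t ht => ?_))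
      simp only [mem_filter, mem_univ, true_and] at ht ⊢
      exact ht.trans_le hba
    · refine Nat.cast_lt.2 (card_lt_card ⟨fun t ht => ?_, fun hsub => ?_⟩)
      · simp only [mem_filter, mem_univ, true_and] at ht ⊢
        exact ht.trans h
      · exact lt_irrefl _ (mem_filter.1 (hsub (mem_filter.2 ⟨mem_univ a, h⟩))).2
  refine ⟨g, fun a b hab => hk ?_, hlt⟩
  exact le_antisymm (not_lt.1 fun h => ((hlt b a).2 h).ne' hab)
    (not_lt.1 fun h => ((hlt a b).2 h).ne hab)

section MorseFunctions

variable [PartialOrder P]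

lemma IsDMF.of_covBy_lt_iff {f g : P → ℝ} (hf : IsDMF f)
    (h : ∀ a b, a ⋖ b → (f a < f b ↔ g a < g b)) : IsDMF g := by
  have hle : ∀ a b, a ⋖ b → (g b ≤ g a ↔ f b ≤ f a) := fun a b hab => by
    rw [← not_lt, ← not_lt, h a b hab]
  intro b
  refine ⟨(hf b).1.anti ?_, (hf b).2.anti ?_⟩
  · rintro a ⟨hab, hg⟩
    exact ⟨hab, (hle a b hab).1 hg⟩
  · rintro c ⟨hbc, hg⟩
    exact ⟨hbc, (hle b c hbc).1 hg⟩

lemma isCrit_iff_of_covBy_lt_iff {f g : P → ℝ} (h : ∀ a b, a ⋖ b → (f a < f b ↔ g a < g b))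
    (b : P) : IsCrit f b ↔ IsCrit g b :=
  and_congr (forall₂_congr fun a hab => h a b hab) (forall₂_congr fun c hbc => h b c hbc)

variable [Fintype P] {f : P → ℝ}

noncomputable def coverMax (f : P → ℝ) (v : P) : ℝ :=
  {t | t = v ∨ t ⋖ v}.toFinset.sup' ⟨v, by simp⟩ f

lemma le_coverMax_self (f : P → ℝ) (v : P) : f v ≤ coverMax f v :=
  Finset.le_sup' f (by simp)

lemma le_coverMax_of_covBy {t v : P} (h : t ⋖ v) : f t ≤ coverMax f v :=
  Finset.le_sup' f (by simp [h])

lemma exists_coverMax_eq (f : P → ℝ) (v : P) : ∃ t, (t = v ∨ t ⋖ v) ∧ coverMax f v = f t := by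
  obtain ⟨t, ht, he⟩ := Finset.exists_mem_eq_sup' _ f
  exact ⟨t, by simpa using ht, he⟩

namespace IsDMF

variable (hf : IsDMF f)
include hf

lemma coverMax_le_of_covBy {v u : P} (hvu : v ⋖ u) (hle : f u ≤ f v) :
    coverMax f u ≤ coverMax f v := by
  obtain ⟨t, rfl | htu, he⟩ := exists_coverMax_eq f u
  · exact he ▸ hle.trans (le_coverMax_self f v)
  rw [he]
  rcases le_or_gt (f u) (f t) with hut | htu'
  · rw [(hf u).1 ⟨htu, hut⟩ ⟨hvu, hle⟩]
    exact le_coverMax_self f v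
  · exact (htu'.trans_le hle).le.trans (le_coverMax_self f v)

variable (hw : TwoWide P)
include hw

lemma lt_coverMax_of_covBy_covBy {a u v : P} (hau : a ⋖ u) (hle : f u ≤ f a) (huv : u ⋖ v) :
    f a < coverMax f v := by
  obtain ⟨d, hdu, had, hdv⟩ := hw a u v hau huv
  have had' : f a < f d := by
    by_contra! h
    exact hdu ((hf a).2 ⟨had, h⟩ ⟨hau, hle⟩)
  exact had'.trans_le (le_coverMax_of_covBy hdv)

lemma coverMax_lt_or_eq_of_covBy {u v : P} (huv : u ⋖ v) :
    coverMax f u < coverMax f v ∨ coverMax f u = f u := by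
  obtain ⟨t, rfl | htu, he⟩ := exists_coverMax_eq f u
  · exact .inr he
  refine .inl (he ▸ ?_)
  rcases le_or_gt (f u) (f t) with hut | htu'
  · exact hf.lt_coverMax_of_covBy_covBy hw htu hut huv
  · exact htu'.trans_le (le_coverMax_of_covBy huv)

lemma coverMax_lt_of_covBy {u v : P} (huv : u ⋖ v) (hlt : f u < f v) :
    coverMax f u < coverMax f v :=
  (hf.coverMax_lt_or_eq_of_covBy hw huv).elim id
    fun h => h ▸ hlt.trans_le (le_coverMax_self f v)

lemma monotone_coverMax : Monotone (coverMax f) := by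
  let := Fintype.toLocallyFiniteOrder (α := P)
  refine (monotone_iff_forall_covBy _).2 fun u v huv => ?_
  exact (hf.coverMax_lt_or_eq_of_covBy hw huv).elim le_of_lt
    fun h => h ▸ le_coverMax_of_covBy huv

end IsDMF

-- Ties of `coverMax` are broken downwards in `P`, as a matched cover `a ⋖ b` must get `b` first.
noncomputable def morseKey (f : P → ℝ) (v : P) : ℝ ×ₗ LinearExtension Pᵒᵈ :=
  toLex (coverMax f v, toLinearExtension (OrderDual.toDual v))

lemma morseKey_injective (f : P → ℝ) : Injective (morseKey f) :=
  fun _ _ h => congrArg (fun k => (ofLex k).2) h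

lemma morseKey_lt_of_coverMax_lt {u v : P} (h : coverMax f u < coverMax f v) :
    morseKey f u < morseKey f v :=
  Prod.Lex.toLex_lt_toLex.2 (.inl h)

lemma morseKey_lt_of_lt_of_coverMax_le {u v : P} (hvu : v < u)
    (h : coverMax f u ≤ coverMax f v) : morseKey f u < morseKey f v := by
  refine Prod.Lex.toLex_lt_toLex.2 (h.lt_or_eq.imp id fun he => ⟨he, ?_⟩)
  exact toLinearExtension.monotone.strictMono_of_injective (fun _ _ => id)
    (OrderDual.toDual_lt_toDual.2 hvu)

lemma IsDMF.morseKey_lt_iff_of_covBy (hf : IsDMF f) (hw : TwoWide P) {a b : P} (hab : a ⋖ b) :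
    morseKey f a < morseKey f b ↔ f a < f b := by
  refine ⟨fun h => ?_, fun h => morseKey_lt_of_coverMax_lt (hf.coverMax_lt_of_covBy hw hab h)⟩
  by_contra! hba
  exact h.not_gt (morseKey_lt_of_lt_of_coverMax_le hab.lt (hf.coverMax_le_of_covBy hab hba))

end MorseFunctions

theorem stmt10 [PartialOrder P] [Fintype P] (hw : TwoWide P) (f : P → ℝ)
    (hf : IsDMF f) :
    ∃ g : P → ℝ, IsDMF g ∧ (∀ b : P, IsCrit f b ↔ IsCrit g b) ∧ Function.Injective g ∧
      ∀ z x y w : P, z < x → x ⋖ y → y < w → g x < g y → g z < g y ∧ g x < g w := by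
  obtain ⟨g, hg_inj, hg⟩ := exists_injective_real_lt_iff (morseKey_injective f)
  have hcov : ∀ a b, a ⋖ b → (f a < f b ↔ g a < g b) := fun a b hab => by
    rw [hg, hf.morseKey_lt_iff_of_covBy hw hab]
  refine ⟨g, hf.of_covBy_lt_iff hcov, isCrit_iff_of_covBy_lt_iff hcov, hg_inj, ?_⟩
  intro z x y w hzx hxy hyw hgxy
  have hE : coverMax f x < coverMax f y := hf.coverMax_lt_of_covBy hw hxy ((hcov x y hxy).2 hgxy)
  simp only [hg]
  exact ⟨morseKey_lt_of_coverMax_lt ((hf.monotone_coverMax hw hzx.le).trans_lt hE),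
    morseKey_lt_of_coverMax_lt (hE.trans_le (hf.monotone_coverMax hw hyw.le))⟩
end

section
/- Let P be a finite poset and f : P → ℝ a discrete Morse function with no up-troubled elements, where a is up-troubled if there exist x, y with a < x ≺ y and f(x) < f(y) ≤ f(a). If b ∈ P is critical for f, then f(v) < f(b) for every v < b. -/
open Finset
open scoped Classical

variable {P : Type*}

theorem apply_lt_of_lt_of_forall_covBy_lt {α : Type*} [PartialOrder P] [IsStronglyCoatomic P]
    [LinearOrder α] {f : P → α}
    (hup : ∀ a x y : P, a < x → x ⋖ y → f x < f y → f a < f y)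
    {b : P} (hb : ∀ a, a ⋖ b → f a < f b) {v : P} (hvb : v < b) : f v < f b := by
  obtain ⟨w, hvw, hwb⟩ := exists_le_covBy_of_lt hvb
  rcases hvw.eq_or_lt with rfl | hvw
  · exact hb v hwb
  · exact hup v w b hvw hwb (hb w hwb)

theorem stmt11_general [PartialOrder P] [Fintype P] (f : P → ℝ)
    (hup : ¬ ∃ a x y : P, a < x ∧ x ⋖ y ∧ f x < f y ∧ f y ≤ f a)
    (b : P) (hb : IsCrit f b) :
    ∀ v : P, v < b → f v < f b := by
  push Not at hup
  exact fun v => apply_lt_of_lt_of_forall_covBy_lt hup hb.1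

theorem stmt11 [PartialOrder P] [Fintype P] (f : P → ℝ) (hf : IsDMF f)
    (hup : ¬ ∃ a x y : P, a < x ∧ x ⋖ y ∧ f x < f y ∧ f y ≤ f a)
    (b : P) (hb : IsCrit f b) :
    ∀ v : P, v < b → f v < f b :=
  stmt11_general f hup b hb
end

section
/- Let P be a finite poset that is 2-wide. If a ≺ b (covering) and c < b with c ≠ a, then either c ≺ b, or there exists t ∈ P with t ≠ a and c < t ≺ b. -/
open Finset
open scoped Classical

variable {P : Type*}

theorem stmt13 [PartialOrder P] [Fintype P] (hw : TwoWide P) (a b c : P)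
    (hab : a ⋖ b) (hcb : c < b) (hca : c ≠ a) :
    c ⋖ b ∨ ∃ t : P, t ≠ a ∧ c < t ∧ t ⋖ b := by
  obtain ⟨t, hct, htb⟩ := hcb.exists_le_covby
  rcases eq_or_lt_of_le hct with rfl | hct
  · exact Or.inl htb
  by_cases hta : t = a
  · subst hta
    obtain ⟨s, hcs, hst⟩ := hct.exists_le_covby
    obtain ⟨d, hda, hsd, hdb⟩ := hw s t b hst hab
    exact Or.inr ⟨d, hda, lt_of_le_of_lt hcs hsd.lt, hdb⟩
  · exact Or.inr ⟨t, hta, hct, htb⟩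
end

section
/- Let P be a finite poset, 2-wide, parity-graded with parity rank function μ, and downward Eulerian, and let g : P → ℝ be an injective discrete Morse function such that whenever z < x ≺ y < w and g(x) < g(y), then g(z) < g(y) and g(x) < g(w). For each b ∈ P, let T(b) be the set of nonempty chains C of P containing b on which g attains its maximum at b. If b is ordinary (not critical) for g, then Σ_{C ∈ T(b)} (−1)^{ℓ(C)} = 0. -/
/-
Deleting `b` identifies the chains through `b` on which `g` peaks at `b` with the chains of
`L ∪ U`, where `L` (resp. `U`) consists of the elements below (resp. above) `b` with smaller
`g`-value; so the signed sum is `χ(L) * χ(U)`, with `χ` minus the reduced Euler characteristic of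
the order complex. If `b ⋖ c` with `g c ≤ g b`, then 2-wideness and the Morse condition put every
element of `U` above `c`, so `L ∪ U` is a cone with apex `c` and `χ(L ∪ U) = 0`. If `a ⋖ b` with
`g b ≤ g a`, sort the chains below `b` by their highest element `m` with `g m ≥ g b`: for `m ≠ a`
the part of `L` above `m` is again a cone, and `m = a` contributes the chains below `a`. Hence
`χ(< b) = χ(L) - χ(< a)`, and the Eulerian condition `χ(< t) = (-1)^μ t` gives `χ(L) = 0`.
-/

open Finset
open scoped Classical

variable {P : Type*}

lemma IsChain.union_of_rel {r : P → P → Prop} {A B : Set P} (hA : IsChain r A)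
    (hB : IsChain r B) (hAB : ∀ x ∈ A, ∀ y ∈ B, r x y) : IsChain r (A ∪ B) := by
  rintro x (hx | hx) y (hy | hy) hxy
  · exact hA hx hy hxy
  · exact Or.inl (hAB x hx y hy)
  · exact Or.inr (hAB y hy x hx)
  · exact hB hx hy hxy

section ChainEuler
variable [PartialOrder P] [Fintype P]

noncomputable def chainsIn (s : Set P) : Finset (Finset P) :=
  univ.filter fun C => IsChain (· ≤ ·) (C : Set P) ∧ (C : Set P) ⊆ s

@[simp]
lemma mem_chainsIn {s : Set P} {C : Finset P} :
    C ∈ chainsIn s ↔ IsChain (· ≤ ·) (C : Set P) ∧ (C : Set P) ⊆ s := by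
  simp [chainsIn]

/-- Minus the reduced Euler characteristic of the order complex of `s`. -/
noncomputable def chainEuler (s : Set P) : ℤ :=
  ∑ C ∈ chainsIn s, (-1) ^ #C

lemma chainEuler_empty : chainEuler (∅ : Set P) = 1 := by
  have : chainsIn (∅ : Set P) = {∅} := by
    ext C
    simp only [mem_chainsIn, Set.subset_empty_iff, coe_eq_empty, mem_singleton,
      and_iff_right_iff_imp]
    rintro rfl
    simp
  simp [chainEuler, this]

lemma chainSum_eq_neg_sum (p : Finset P → Prop) :
    chainSum p = -∑ C ∈ univ.filter
      (fun C : Finset P => C.Nonempty ∧ IsChain (· ≤ ·) (C : Set P) ∧ p C), (-1) ^ #C := by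
  rw [chainSum, ← sum_neg_distrib]
  refine sum_congr rfl fun C hC => ?_
  obtain ⟨n, hn⟩ := Nat.exists_eq_add_one_of_ne_zero (mem_filter.1 hC).2.1.card_pos.ne'
  rw [hn, pow_succ]
  simp

lemma chainSum_subset_eq (s : Set P) :
    chainSum (fun C : Finset P => (C : Set P) ⊆ s) = 1 - chainEuler s := by
  have hne : (chainsIn s).erase ∅ = univ.filter
      (fun C : Finset P => C.Nonempty ∧ IsChain (· ≤ ·) (C : Set P) ∧ (C : Set P) ⊆ s) := by
    ext C
    simp [nonempty_iff_ne_empty]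
  have hsplit := add_sum_erase (chainsIn s) (fun C => (-1 : ℤ) ^ #C) (a := ∅) (by simp)
  rw [chainSum_eq_neg_sum, ← hne, chainEuler, ← hsplit]
  simp

lemma filter_not_mem_chainsIn_insert {m : P} {s : Set P} (hm : m ∉ s) :
    (chainsIn (insert m s)).filter (m ∉ ·) = chainsIn s := by
  ext C
  simp only [mem_filter, mem_chainsIn]
  constructor
  · rintro ⟨⟨hC, hCs⟩, hmC⟩
    exact ⟨hC, (Set.subset_insert_iff_of_notMem (mem_coe.not.2 hmC)).1 hCs⟩
  · rintro ⟨hC, hCs⟩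
    exact ⟨⟨hC, hCs.trans (Set.subset_insert m s)⟩, fun hmC => hm (hCs hmC)⟩

lemma filter_mem_chainsIn_insert {m : P} {s : Set P} (hs : ∀ x ∈ s, x ≤ m ∨ m ≤ x) :
    (chainsIn (insert m s)).filter (m ∈ ·) = (chainsIn s).image (insert m) := by
  ext C
  simp only [mem_filter, mem_chainsIn, mem_image]
  constructor
  · rintro ⟨⟨hC, hCs⟩, hmC⟩
    refine ⟨C.erase m, ⟨hC.mono (by simp), ?_⟩, insert_erase hmC⟩
    intro x hx
    simp only [coe_erase, Set.mem_sdiff, Set.mem_singleton_iff] at hx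
    exact (hCs hx.1).resolve_left hx.2
  · rintro ⟨D, ⟨hD, hDs⟩, rfl⟩
    refine ⟨⟨?_, ?_⟩, mem_insert_self m D⟩
    · rw [coe_insert]
      exact hD.insert fun x hx _ => (hs x (hDs hx)).symm
    · rw [coe_insert]
      exact Set.insert_subset_insert hDs

lemma sum_filter_mem_chainsIn_insert {m : P} {s : Set P} (hm : m ∉ s)
    (hs : ∀ x ∈ s, x ≤ m ∨ m ≤ x) :
    ∑ C ∈ (chainsIn (insert m s)).filter (m ∈ ·), (-1 : ℤ) ^ #C = -chainEuler s := by
  have hmD : ∀ D ∈ chainsIn s, m ∉ D := fun D hD hmD => hm ((mem_chainsIn.1 hD).2 hmD)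
  rw [filter_mem_chainsIn_insert hs, sum_image, chainEuler, ← sum_neg_distrib]
  · refine sum_congr rfl fun D hD => ?_
    rw [card_insert_of_notMem (hmD D hD), pow_succ, mul_neg_one]
  · intro D hD E hE h
    rw [← erase_insert (hmD D hD), h, erase_insert (hmD E hE)]

lemma chainEuler_insert_eq_zero {m : P} {s : Set P} (hm : m ∉ s)
    (hs : ∀ x ∈ s, x ≤ m ∨ m ≤ x) : chainEuler (insert m s) = 0 := by
  rw [chainEuler, ← sum_filter_add_sum_filter_not _ (m ∈ ·), sum_filter_mem_chainsIn_insert hm hs,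
    filter_not_mem_chainsIn_insert hm, chainEuler, neg_add_cancel]

lemma chainEuler_eq_zero_of_forall_comparable {u : P} {s : Set P} (hu : u ∈ s)
    (hs : ∀ x ∈ s, x ≤ u ∨ u ≤ x) : chainEuler s = 0 := by
  rw [← Set.insert_sdiff_self_of_mem hu]
  exact chainEuler_insert_eq_zero (by simp) fun x hx => hs x hx.1

lemma chainEuler_union_of_lt {s t : Set P} (hst : ∀ x ∈ s, ∀ y ∈ t, x < y) :
    chainEuler (s ∪ t) = chainEuler s * chainEuler t := by
  have hdisj : ∀ x ∈ s, x ∉ t := fun x hs ht => lt_irrefl x (hst x hs x ht)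
  have hsplit : ∀ C ∈ chainsIn (s ∪ t), C.filter (· ∈ s) ∪ C.filter (· ∈ t) = C := by
    intro C hC
    rw [← filter_or]
    exact filter_true_of_mem fun x hx => (mem_chainsIn.1 hC).2 hx
  rw [chainEuler, chainEuler, chainEuler, sum_mul_sum, ← sum_product']
  refine sum_nbij' (fun C => (C.filter (· ∈ s), C.filter (· ∈ t))) (fun A => A.1 ∪ A.2)
    ?_ ?_ ?_ ?_ ?_
  · intro C hC
    obtain ⟨hC, -⟩ := mem_chainsIn.1 hC
    simp only [mem_product, mem_chainsIn, coe_filter]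
    exact ⟨⟨hC.mono (Set.sep_subset _ _), fun x hx => hx.2⟩,
      hC.mono (Set.sep_subset _ _), fun x hx => hx.2⟩
  · rintro ⟨A, B⟩ hAB
    simp only [mem_product, mem_chainsIn] at hAB ⊢
    obtain ⟨⟨hA, hAs⟩, hB, hBt⟩ := hAB
    rw [coe_union]
    exact ⟨hA.union_of_rel hB fun x hx y hy => (hst x (hAs hx) y (hBt hy)).le,
      Set.union_subset_union hAs hBt⟩
  · exact hsplit
  · rintro ⟨A, B⟩ hAB
    simp only [mem_product, mem_chainsIn] at hAB
    obtain ⟨⟨-, hAs⟩, -, hBt⟩ := hAB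
    simp only [filter_union, Prod.mk.injEq]
    rw [filter_true_of_mem fun x hx => hAs hx, filter_false_of_mem fun x hx => hdisj x (hAs hx),
      filter_false_of_mem fun x hx hs => hdisj x hs (hBt hx), filter_true_of_mem fun x hx => hBt hx]
    exact ⟨union_empty A, empty_union B⟩
  · intro C hC
    rw [← pow_add, ← card_union_of_disjoint (disjoint_filter.2 fun x _ hs => hdisj x hs),
      hsplit C hC]

/-- The chains of `s` containing `m` in which `m` is the largest element lying in `M`. -/
noncomputable def chainsWithTop (s M : Set P) (m : P) : Finset (Finset P) :=
  (chainsIn (insert m ((s ∩ Set.Iio m) ∪ (s \ M ∩ Set.Ioi m)))).filter (m ∈ ·)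

lemma le_of_mem_chainsWithTop {s M : Set P} {m x : P} {C : Finset P}
    (hC : C ∈ chainsWithTop s M m) (hx : x ∈ C) (hxM : x ∈ M) : x ≤ m := by
  rcases (mem_chainsIn.1 (mem_filter.1 hC).1).2 hx with rfl | ⟨-, hxm⟩ | ⟨⟨-, hxM'⟩, -⟩
  · exact le_rfl
  · exact hxm.le
  · exact absurd hxM hxM'

lemma pairwiseDisjoint_chainsWithTop (s M : Set P) :
    (univ.filter (· ∈ s ∩ M) : Set P).PairwiseDisjoint (chainsWithTop s M) := by
  intro m hm m' hm' hmm'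
  refine disjoint_left.2 fun C hC hC' => hmm' (le_antisymm ?_ ?_)
  · exact le_of_mem_chainsWithTop hC' (mem_filter.1 hC).2 (mem_filter.1 hm).2.2
  · exact le_of_mem_chainsWithTop hC (mem_filter.1 hC').2 (mem_filter.1 hm').2.2

lemma filter_not_disjoint_chainsIn (s M : Set P) :
    (chainsIn s).filter (fun C : Finset P => ¬ Disjoint (C : Set P) M) =
      (univ.filter (· ∈ s ∩ M)).biUnion (chainsWithTop s M) := by
  ext C
  simp only [mem_filter, mem_biUnion, mem_univ, true_and, chainsWithTop, mem_chainsIn]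
  constructor
  · rintro ⟨⟨hC, hCs⟩, hCM⟩
    have hne : (C.filter (· ∈ M)).Nonempty := by
      obtain ⟨x, hxC, hxM⟩ := Set.not_disjoint_iff.1 hCM
      exact ⟨x, mem_filter.2 ⟨hxC, hxM⟩⟩
    obtain ⟨m, hm, hmax⟩ := (C.filter (· ∈ M)).exists_maximal hne
    obtain ⟨hmC, hmM⟩ := mem_filter.1 hm
    refine ⟨m, ⟨hCs hmC, hmM⟩, ⟨hC, fun x hx => ?_⟩, hmC⟩
    obtain rfl | hxm := eq_or_ne x m
    · exact Set.mem_insert x _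
    rcases hC hx hmC hxm with hxm' | hmx
    · exact Or.inr (Or.inl ⟨hCs hx, hxm'.lt_of_ne hxm⟩)
    · refine Or.inr (Or.inr ⟨⟨hCs hx, fun hxM => hxm ?_⟩, hmx.lt_of_ne' hxm⟩)
      exact le_antisymm (hmax (mem_filter.2 ⟨hx, hxM⟩) hmx) hmx
  · rintro ⟨m, ⟨hms, hmM⟩, ⟨hC, hCsub⟩, hmC⟩
    refine ⟨⟨hC, fun x hx => ?_⟩, Set.not_disjoint_iff.2 ⟨m, hmC, hmM⟩⟩
    rcases hCsub hx with rfl | ⟨hxs, -⟩ | ⟨⟨hxs, -⟩, -⟩ <;> assumption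

lemma chainEuler_eq_sub_sum (s M : Set P) :
    chainEuler s = chainEuler (s \ M) -
      ∑ m ∈ univ.filter (· ∈ s ∩ M),
        chainEuler (s ∩ Set.Iio m) * chainEuler (s \ M ∩ Set.Ioi m) := by
  have hmiss : (chainsIn s).filter (fun C : Finset P => Disjoint (C : Set P) M) =
      chainsIn (s \ M) := by
    ext C
    simp only [mem_filter, mem_chainsIn, Set.subset_sdiff, and_assoc]
  rw [chainEuler, ← sum_filter_add_sum_filter_not _ (fun C : Finset P => Disjoint (C : Set P) M),
    hmiss, filter_not_disjoint_chainsIn, sum_biUnion (pairwiseDisjoint_chainsWithTop s M),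
    chainEuler, sub_eq_add_neg, ← sum_neg_distrib]
  refine congrArg _ (sum_congr rfl fun m _ => ?_)
  rw [chainsWithTop, sum_filter_mem_chainsIn_insert, chainEuler_union_of_lt]
  · exact fun x hx y hy => hx.2.trans hy.2
  · rintro (⟨-, h⟩ | ⟨-, h⟩) <;> exact lt_irrefl m h
  · rintro x (⟨-, h⟩ | ⟨-, h⟩)
    · exact Or.inl h.le
    · exact Or.inr h.le

lemma chainEuler_Iio {μ : P → ℕ} (hμ : ParityRank μ) (hE : DownEulerian μ) (t : P) :
    chainEuler (Set.Iio t) = (-1) ^ μ t := by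
  by_cases ht : IsMin t
  · rw [Set.Iio_eq_empty_iff.2 ht, chainEuler_empty, hμ.2.1 t ht, pow_zero]
  · have h : 1 - chainEuler (Set.Iio t) = (-1) ^ (μ t + 1) + 1 :=
      (chainSum_subset_eq _).symm.trans (hE t ht)
    rw [pow_succ] at h
    linarith

lemma chainSum_mem_forall_le_eq {g : P → ℝ} (hinj : Function.Injective g) (b : P) :
    chainSum (fun C => b ∈ C ∧ ∀ x ∈ C, g x ≤ g b) =
      chainEuler ({x | x < b ∧ g x < g b} ∪ {x | b < x ∧ g x < g b}) := by
  set s := {x | x < b ∧ g x < g b} ∪ {x | b < x ∧ g x < g b}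
  have hbs : b ∉ s := by rintro (⟨h, -⟩ | ⟨h, -⟩) <;> exact lt_irrefl b h
  have hcomp : ∀ x ∈ s, x ≤ b ∨ b ≤ x := by
    rintro x (⟨h, -⟩ | ⟨h, -⟩)
    · exact Or.inl h.le
    · exact Or.inr h.le
  rw [chainSum_eq_neg_sum, neg_eq_iff_eq_neg, ← sum_filter_mem_chainsIn_insert hbs hcomp]
  refine sum_congr ?_ fun _ _ => rfl
  ext C
  simp only [mem_filter, mem_univ, true_and, mem_chainsIn]
  constructor
  · rintro ⟨-, hC, hbC, hle⟩
    refine ⟨⟨hC, fun x hx => ?_⟩, hbC⟩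
    obtain rfl | hxb := eq_or_ne x b
    · exact Set.mem_insert x s
    have hgx := (hle x hx).lt_of_ne (hinj.ne hxb)
    rcases hC hx hbC hxb with h | h
    · exact Or.inr (Or.inl ⟨h.lt_of_ne hxb, hgx⟩)
    · exact Or.inr (Or.inr ⟨h.lt_of_ne' hxb, hgx⟩)
  · rintro ⟨⟨hC, hCs⟩, hbC⟩
    refine ⟨⟨b, hbC⟩, hC, hbC, fun x hx => ?_⟩
    rcases hCs hx with rfl | ⟨-, h⟩ | ⟨-, h⟩
    · exact le_rfl
    · exact h.le
    · exact h.le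

end ChainEuler

section Morse
variable [PartialOrder P] {g : P → ℝ}

lemma IsDMF.lt_of_covBy_of_ne (hg : IsDMF g) {a b x : P} (hab : a ⋖ b) (ha : g b ≤ g a)
    (hxb : x ⋖ b) (hxa : x ≠ a) : g x < g b :=
  lt_of_not_ge fun hx => hxa ((hg b).1 ⟨hxb, hx⟩ ⟨hab, ha⟩)

variable [Finite P]

lemma IsDMF.exists_covBy_le_of_lt (hg : IsDMF g) (hw : TwoWide P) {m x : P} (hmx : m < x) :
    ∃ u, m ⋖ u ∧ u ≤ x ∧ g u ≤ g x := by
  induction x using WellFoundedLT.induction with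
  | _ x ih =>
  obtain ⟨y, hmy, hyx⟩ := exists_le_covBy_of_lt hmx
  obtain rfl | hmy := hmy.eq_or_lt
  · exact ⟨x, hyx, le_rfl, le_rfl⟩
  obtain hgy | hgy := le_or_gt (g y) (g x)
  · obtain ⟨u, hmu, huy, hgu⟩ := ih y hyx.lt hmy
    exact ⟨u, hmu, huy.trans hyx.le, hgu.trans hgy⟩
  -- Otherwise the diamond over `p ⋖ y ⋖ x` gives a second lower cover `d` of `x`, and the Morse
  -- condition at `x` allows only one lower cover with value `≥ g x`.
  obtain ⟨p, hmp, hpy⟩ := exists_le_covBy_of_lt hmy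
  obtain ⟨d, hdy, hpd, hdx⟩ := hw p y x hpy hyx
  have hgd : g d < g x := hg.lt_of_covBy_of_ne hyx hgy.le hdx hdy
  obtain rfl | hmp := hmp.eq_or_lt
  · exact ⟨d, hpd, hdx.le, hgd.le⟩
  obtain ⟨u, hmu, hud, hgu⟩ := ih d hdx.lt (hmp.trans hpd.lt)
  exact ⟨u, hmu, hud.trans hdx.le, hgu.trans hgd.le⟩

lemma IsDMF.le_of_covBy (hg : IsDMF g) (hw : TwoWide P) {m u x : P} (hmu : m ⋖ u)
    (hu : g u ≤ g m) (hmx : m < x) (hx : g x ≤ g m) : u ≤ x := by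
  obtain ⟨u', hmu', hu'x, hgu'⟩ := hg.exists_covBy_le_of_lt hw hmx
  rwa [(hg m).2 ⟨hmu, hu⟩ ⟨hmu', hgu'.trans hx⟩]

end Morse

section Main
variable [PartialOrder P] [Fintype P] {g : P → ℝ}

lemma chainEuler_inter_Ioi_eq_zero (hw : TwoWide P) (hg : IsDMF g) (hinj : Function.Injective g)
    {a b m : P} (hab : a ⋖ b) (ha : g b ≤ g a) (hmb : m < b) (hm : g b ≤ g m) (hma : m ≠ a) :
    chainEuler ({x | x < b ∧ g x < g b} ∩ Set.Ioi m) = 0 := by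
  obtain ⟨u, hmu, hub, hgu⟩ := hg.exists_covBy_le_of_lt hw hmb
  have hub' : u ≠ b := by
    rintro rfl
    exact hma ((hg u).1 ⟨hmu, hm⟩ ⟨hab, ha⟩)
  refine chainEuler_eq_zero_of_forall_comparable
    ⟨⟨hub.lt_of_ne hub', hgu.lt_of_ne (hinj.ne hub')⟩, hmu.lt⟩ fun x hx => Or.inr ?_
  exact hg.le_of_covBy hw hmu (hgu.trans hm) hx.2 (hx.1.2.le.trans hm)

lemma chainEuler_below_eq_zero_of_covBy (hw : TwoWide P) (hg : IsDMF g)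
    (hinj : Function.Injective g) {μ : P → ℕ} (hμ : ParityRank μ) (hE : DownEulerian μ) {a b : P} (hab : a ⋖ b)
    (ha : g b ≤ g a) : chainEuler {x | x < b ∧ g x < g b} = 0 := by
  set L := {x | x < b ∧ g x < g b}
  have hdiff : Set.Iio b \ {x | g b ≤ g x} = L := by
    ext x
    simp [L]
  have hlower : Set.Iio b ∩ Set.Iio a = Set.Iio a :=
    Set.inter_eq_right.2 fun x hx => lt_trans hx hab.lt
  have hupper : L ∩ Set.Ioi a = ∅ :=
    Set.eq_empty_of_forall_notMem fun x hx => hab.2 hx.2 hx.1.1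
  have hsplit := chainEuler_eq_sub_sum (Set.Iio b) {x | g b ≤ g x}
  rw [hdiff, sum_eq_single_of_mem a (by simp [hab.lt, ha]), hlower, hupper, chainEuler_Iio hμ hE,
    chainEuler_Iio hμ hE, chainEuler_empty, mul_one, hμ.2.2 a b hab] at hsplit
  · rcases Nat.le_one_iff_eq_zero_or_eq_one.1 (hμ.1 a) with h | h <;> simp [h] at hsplit <;>
      linarith
  · intro m hm hma
    obtain ⟨hmb, hgm⟩ := (mem_filter.1 hm).2
    rw [chainEuler_inter_Ioi_eq_zero hw hg hinj hab ha hmb hgm hma, mul_zero]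

end Main

theorem stmt15_general [PartialOrder P] [Fintype P] (hw : TwoWide P) (μ : P → ℕ)
    (hμ : ParityRank μ) (hE : DownEulerian μ) (g : P → ℝ) (hg : IsDMF g)
    (hinj : Function.Injective g)
    (b : P) (hb : ¬ IsCrit g b) :
    chainSum (fun C => b ∈ C ∧ ∀ x ∈ C, g x ≤ g b) = 0 := by
  rw [chainSum_mem_forall_le_eq hinj]
  simp only [IsCrit, not_and_or, not_forall, not_lt, exists_prop] at hb
  rcases hb with ⟨a, hab, ha⟩ | ⟨c, hbc, hc⟩
  · rw [chainEuler_union_of_lt fun x hx y hy => hx.1.trans hy.1,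
      chainEuler_below_eq_zero_of_covBy hw hg hinj hμ hE hab ha, zero_mul]
  · refine chainEuler_eq_zero_of_forall_comparable
      (Or.inr ⟨hbc.lt, hc.lt_of_ne (hinj.ne hbc.ne')⟩) ?_
    rintro x (hx | hx)
    · exact Or.inl (hx.1.trans hbc.lt).le
    · exact Or.inr (hg.le_of_covBy hw hbc hc hx.1 hx.2.le)

theorem stmt15 [PartialOrder P] [Fintype P] (hw : TwoWide P) (μ : P → ℕ)
    (hμ : ParityRank μ) (hE : DownEulerian μ) (g : P → ℝ) (hg : IsDMF g)
    (hinj : Function.Injective g)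
    (hcond : ∀ z x y w : P, z < x → x ⋖ y → y < w → g x < g y → g z < g y ∧ g x < g w)
    (b : P) (hb : ¬ IsCrit g b) :
    chainSum (fun C => b ∈ C ∧ ∀ x ∈ C, g x ≤ g b) = 0 :=
  stmt15_general hw μ hμ hE g hg hinj b hb
end

section
/- Let P be a finite poset that is 2-wide, parity-graded with parity rank function μ, and downward Eulerian, and let f : P → ℝ be a discrete Morse function. Let N₀ (resp. N₁) be the number of critical elements x with μ(x) = 0 (resp. μ(x) = 1). Then N₀ − N₁ = χ(Δ(P)), where χ(Δ(P)) = Σ over all nonempty chains C of P of (−1)^{|C|−1} is the Euler characteristic of the order complex of P. -/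
/-!
Grouping the chains of `P` by their largest element `a`, the chains topped by `a` contribute
`1 - χ(Δ(P_{<a}))`, which the Eulerian condition turns into `(-1)^μ(a)`; hence
`χ(Δ(P)) = ∑ₐ (-1)^μ(a)`. In a 2-wide poset each non-critical element of a discrete Morse function
has exactly one partner along a covering relation (Forman's lemma), and partners have opposite
parity, so only the critical elements survive in that sum.
-/

open Finset
open scoped Classical

variable {P : Type*}

section Chains

variable [PartialOrder P]

lemma Finset.exists_isGreatest_of_isChain {C : Finset P} (hC : IsChain (· ≤ ·) (C : Set P))
    (hne : C.Nonempty) : ∃ a, IsGreatest (C : Set P) a := by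
  obtain ⟨m, hm⟩ := C.exists_maximal hne
  exact ⟨m, hm.1, fun x hx => (hC.total hx hm.1).elim id (hm.2 hx)⟩

variable [Fintype P]

lemma sum_chains_isGreatest_eq_sum_chains_lt (a : P) :
    ∑ C ∈ univ.filter (fun C : Finset P => IsChain (· ≤ ·) (C : Set P) ∧ IsGreatest (C : Set P) a),
      (-1 : ℤ) ^ (C.card - 1) =
    ∑ D ∈ univ.filter (fun D : Finset P => IsChain (· ≤ ·) (D : Set P) ∧ ∀ x ∈ D, x < a),
      (-1 : ℤ) ^ D.card := by
  refine sum_nbij' (fun C => C.erase a) (insert a) ?_ ?_ ?_ ?_ ?_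
  · simp only [mem_filter, mem_univ, true_and, coe_erase]
    rintro C ⟨hC, haC, ha⟩
    exact ⟨hC.mono Set.sdiff_subset,
      fun x hx => (ha (mem_of_mem_erase hx)).lt_of_ne (ne_of_mem_erase hx)⟩
  · simp only [mem_filter, mem_univ, true_and, coe_insert]
    rintro D ⟨hD, hlt⟩
    exact ⟨hD.insert fun x hx _ => .inr (hlt x hx).le,
      Set.mem_insert a _, Set.forall_mem_insert.2 ⟨le_rfl, fun x hx => (hlt x hx).le⟩⟩
  · simp only [mem_filter, mem_univ, true_and]
    exact fun C ⟨_, haC, _⟩ => insert_erase haC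
  · simp only [mem_filter, mem_univ, true_and]
    exact fun D ⟨_, hlt⟩ => erase_insert fun haD => (hlt a haD).false
  · simp only [mem_filter, mem_univ, true_and]
    exact fun C ⟨_, haC, _⟩ => by rw [card_erase_of_mem haC]

lemma sum_chains_neg_one_pow_card {p : Finset P → Prop} [DecidablePred p] (hp : p ∅) :
    ∑ D ∈ univ.filter (fun D : Finset P => IsChain (· ≤ ·) (D : Set P) ∧ p D), (-1 : ℤ) ^ D.card =
      1 - chainSum p := by
  have hempty : ∅ ∈ univ.filter (fun D : Finset P => IsChain (· ≤ ·) (D : Set P) ∧ p D) := by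
    simp [hp]
  rw [sum_eq_add_sum_sdiff_singleton_of_mem hempty, card_empty, pow_zero, chainSum, sub_eq_add_neg,
    ← sum_neg_distrib]
  congr 1
  refine sum_congr ?_ fun D hD => ?_
  · ext D
    simp only [mem_sdiff, mem_filter, mem_univ, true_and, mem_singleton, nonempty_iff_ne_empty]
    tauto
  · simp only [mem_filter] at hD
    obtain ⟨n, hn⟩ := Nat.exists_eq_add_one_of_ne_zero (card_ne_zero.2 hD.2.1)
    rw [hn, pow_succ]
    simp

lemma chainSum_true_eq_sum_one_sub_chainSum_lt :
    chainSum (P := P) (fun _ => True) = ∑ a : P, (1 - chainSum (fun C => ∀ x ∈ C, x < a)) := by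
  have hunion : univ.filter (fun C : Finset P => C.Nonempty ∧ IsChain (· ≤ ·) (C : Set P) ∧ True) =
      univ.biUnion fun a => univ.filter
        (fun C : Finset P => IsChain (· ≤ ·) (C : Set P) ∧ IsGreatest (C : Set P) a) := by
    ext C
    simp only [mem_filter, mem_univ, true_and, and_true, mem_biUnion, exists_and_left]
    refine ⟨fun ⟨hne, hC⟩ => ⟨hC, exists_isGreatest_of_isChain hC hne⟩,
      fun ⟨hC, a, ha⟩ => ⟨⟨a, ha.1⟩, hC⟩⟩
  have hdisj : ((univ : Finset P) : Set P).PairwiseDisjoint fun a => univ.filter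
      (fun C : Finset P => IsChain (· ≤ ·) (C : Set P) ∧ IsGreatest (C : Set P) a) := by
    intro a _ b _ hab
    simp only [Function.onFun, disjoint_left, mem_filter, mem_univ, true_and]
    exact fun C ha hb => hab (ha.2.unique hb.2)
  rw [chainSum, filter_congr_decidable, hunion, sum_biUnion hdisj]
  refine sum_congr rfl fun a _ => ?_
  rw [sum_chains_isGreatest_eq_sum_chains_lt,
    sum_chains_neg_one_pow_card fun x hx => absurd hx (notMem_empty x)]

end Chains

lemma sum_neg_one_pow_filter [Fintype P] {μ : P → ℕ} (hμ : ∀ a, μ a ≤ 1) (p : P → Prop)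
    [DecidablePred p] :
    ∑ a ∈ univ.filter p, (-1 : ℤ) ^ μ a =
      (#(univ.filter fun a => μ a = 0 ∧ p a) : ℤ) - #(univ.filter fun a => μ a = 1 ∧ p a) := by
  rw [sum_filter, card_filter, card_filter]
  push_cast
  rw [← sum_sub_distrib]
  refine sum_congr rfl fun a _ => ?_
  rcases Nat.le_one_iff_eq_zero_or_eq_one.1 (hμ a) with ha | ha <;> by_cases hp : p a <;>
    simp [ha, hp]

section ParityRank

variable [PartialOrder P] {μ : P → ℕ}

lemma ParityRank.neg_one_pow_of_covBy (hμ : ParityRank μ) {a b : P} (h : a ⋖ b) :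
    (-1 : ℤ) ^ μ b = -(-1) ^ μ a := by
  rw [hμ.2.2 a b h]
  rcases Nat.le_one_iff_eq_zero_or_eq_one.1 (hμ.1 a) with ha | ha <;> simp [ha]

lemma DownEulerian.one_sub_chainSum_lt [Fintype P] (hE : DownEulerian μ) (hμ : ParityRank μ)
    (a : P) : 1 - chainSum (fun C => ∀ x ∈ C, x < a) = (-1 : ℤ) ^ μ a := by
  by_cases ha : IsMin a
  · have hbelow : chainSum (fun C => ∀ x ∈ C, x < a) = 0 := by
      refine sum_eq_zero fun C hC => ?_
      simp only [mem_filter] at hC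
      obtain ⟨-, ⟨x, hx⟩, -, hlt⟩ := hC
      exact absurd (hlt x hx) ha.not_lt
    rw [hbelow, hμ.2.1 a ha, pow_zero, sub_zero]
  · rw [hE a ha, pow_succ]
    ring

end ParityRank

section Morse

variable [PartialOrder P] {f : P → ℝ} {x y z : P}

def MorseMatched (f : P → ℝ) (x y : P) : Prop :=
  (x ⋖ y ∧ f y ≤ f x) ∨ (y ⋖ x ∧ f x ≤ f y)

lemma MorseMatched.symm (h : MorseMatched f x y) : MorseMatched f y x := Or.symm h

lemma MorseMatched.ne (h : MorseMatched f x y) : x ≠ y := by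
  rcases h with ⟨h, -⟩ | ⟨h, -⟩
  exacts [h.ne, h.ne']

lemma not_isCrit_iff_exists_morseMatched : ¬ IsCrit f x ↔ ∃ y, MorseMatched f x y := by
  simp only [IsCrit, MorseMatched, not_and_or, not_forall, not_lt, exists_prop, exists_or]
  exact or_comm

-- Otherwise the element `d ≠ b` with `a ⋖ d ⋖ c` would be a second partner, besides `b`,
-- of `a` or of `c`.
lemma IsDMF.lt_or_lt_of_covBy_covBy (hw : TwoWide P) (hf : IsDMF f) {a b c : P} (hab : a ⋖ b)
    (hbc : b ⋖ c) : f a < f b ∨ f b < f c := by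
  by_contra! h
  obtain ⟨d, hdb, had, hdc⟩ := hw a b c hab hbc
  rcases le_or_gt (f d) (f a) with hda | hda
  · exact hdb ((hf a).2 ⟨had, hda⟩ ⟨hab, h.1⟩)
  · exact hdb ((hf c).1 ⟨hdc, by linarith⟩ ⟨hbc, h.2⟩)

lemma IsDMF.morseMatched_unique (hw : TwoWide P) (hf : IsDMF f) (hy : MorseMatched f x y)
    (hz : MorseMatched f x z) : y = z := by
  rcases hy with ⟨hxy, hfy⟩ | ⟨hyx, hfy⟩ <;> rcases hz with ⟨hxz, hfz⟩ | ⟨hzx, hfz⟩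
  · exact (hf x).2 ⟨hxy, hfy⟩ ⟨hxz, hfz⟩
  · rcases hf.lt_or_lt_of_covBy_covBy hw hzx hxy with h | h <;> linarith
  · rcases hf.lt_or_lt_of_covBy_covBy hw hyx hxz with h | h <;> linarith
  · exact (hf x).1 ⟨hyx, hfy⟩ ⟨hzx, hfz⟩

lemma sum_neg_one_pow_not_isCrit [Fintype P] {μ : P → ℕ} (hw : TwoWide P) (hμ : ParityRank μ)
    (hf : IsDMF f) : ∑ x ∈ univ.filter (fun x => ¬ IsCrit f x), (-1 : ℤ) ^ μ x = 0 := by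
  have partner : ∀ x ∈ univ.filter (fun x => ¬ IsCrit f x), ∃ y, MorseMatched f x y :=
    fun x hx => not_isCrit_iff_exists_morseMatched.1 (mem_filter.1 hx).2
  choose g hg using partner
  have g_mem : ∀ x hx, g x hx ∈ univ.filter (fun x => ¬ IsCrit f x) := fun x hx =>
    mem_filter.2 ⟨mem_univ _, not_isCrit_iff_exists_morseMatched.2 ⟨x, (hg x hx).symm⟩⟩
  refine sum_involution g (fun x hx => ?_) (fun x hx _ => (hg x hx).ne.symm) g_mem
    fun x hx => hf.morseMatched_unique hw (hg _ (g_mem x hx)) (hg x hx).symm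
  rcases hg x hx with ⟨h, -⟩ | ⟨h, -⟩
  · rw [hμ.neg_one_pow_of_covBy h, add_neg_cancel]
  · rw [hμ.neg_one_pow_of_covBy h, neg_add_cancel]

end Morse

theorem stmt16 [PartialOrder P] [Fintype P] (hw : TwoWide P) (μ : P → ℕ)
    (hμ : ParityRank μ) (hE : DownEulerian μ) (f : P → ℝ) (hf : IsDMF f) :
    ((Finset.univ.filter (fun x : P => μ x = 0 ∧ IsCrit f x)).card : ℤ) -
      ((Finset.univ.filter (fun x : P => μ x = 1 ∧ IsCrit f x)).card : ℤ) =
      chainSum (P := P) (fun _ => True) := by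
  calc _ = ∑ x ∈ univ.filter (IsCrit f), (-1 : ℤ) ^ μ x := (sum_neg_one_pow_filter hμ.1 _).symm
    _ = ∑ x, (-1 : ℤ) ^ μ x := by
      rw [← sum_filter_add_sum_filter_not univ (IsCrit f), sum_neg_one_pow_not_isCrit hw hμ hf,
        add_zero]
    _ = ∑ x, (1 - chainSum (fun C => ∀ y ∈ C, y < x)) :=
      sum_congr rfl fun x _ => (hE.one_sub_chainSum_lt hμ x).symm
    _ = _ := chainSum_true_eq_sum_one_sub_chainSum_lt.symm
end

section
/- Let P be a finite poset and f : P → ℝ a discrete Morse function with no short-up-troubled elements, where a is short-up-troubled if there exist x, y with a ≺ x ≺ y and f(x) < f(y) ≤ f(a). Assume furthermore the 2-wide condition holds. Then P has no up-troubled elements at all: there is no a and no x, y with a < x ≺ y and f(x) < f(y) ≤ f(a). -/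
open Finset
open scoped Classical

variable {P : Type*}

theorem IsDMF.eq_of_covBy_of_le [PartialOrder P] {f : P → ℝ} (hf : IsDMF f) {a c d : P}
    (hac : a ⋖ c) (had : a ⋖ d) (hc : f c ≤ f a) (hd : f d ≤ f a) : c = d :=
  (hf a).2 ⟨hac, hc⟩ ⟨had, hd⟩

/- Downward induction on `a`: if `a ⋖ c < x`, two-wideness gives a second cover `d` of `a`
below `x`, and by induction both `c` and `d` lie below `f y`; were `f y ≤ f a`, the Morse
condition at `a` would force `c = d`. -/
theorem lt_of_lt_of_covBy_of_twoWide [PartialOrder P] [IsStronglyAtomic P] [WellFoundedGT P]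
    (hw : TwoWide P) {f : P → ℝ} (hf : IsDMF f)
    (hs : ¬ ∃ a x y : P, a ⋖ x ∧ x ⋖ y ∧ f x < f y ∧ f y ≤ f a)
    {x y : P} (hxy : x ⋖ y) (hfxy : f x < f y) (a : P) (hax : a < x) : f a < f y := by
  induction a using WellFoundedGT.induction with
  | ind a ih =>
    by_contra! hya
    obtain ⟨c, hac, hcx⟩ := hax.exists_covby_le
    obtain rfl | hcx := hcx.eq_or_lt
    · exact hs ⟨a, c, y, hac, hxy, hfxy, hya⟩
    obtain ⟨e, hce, hex⟩ := hcx.exists_covby_le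
    obtain ⟨d, hdc, had, hde⟩ := hw a c e hac hce
    have hfc : f c < f y := ih c hac.lt hcx
    have hfd : f d < f y := ih d had.lt (hde.lt.trans_le hex)
    exact hdc (hf.eq_of_covBy_of_le had hac (by linarith) (by linarith))

theorem stmt18 [PartialOrder P] [Fintype P] (hw : TwoWide P) (f : P → ℝ)
    (hf : IsDMF f)
    (hs : ¬ ∃ a x y : P, a ⋖ x ∧ x ⋖ y ∧ f x < f y ∧ f y ≤ f a) :
    ¬ ∃ a x y : P, a < x ∧ x ⋖ y ∧ f x < f y ∧ f y ≤ f a := by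
  rintro ⟨a, x, y, hax, hxy, hfxy, hya⟩
  exact (lt_of_lt_of_covBy_of_twoWide hw hf hs hxy hfxy a hax).not_ge hya
end
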